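/- arXiv:1908.06411 — 9 statements merged into one kernel-verified Lean document; each statement's English description precedes it below -/
import Mathlib

section
/- Let N = p_1 * p_2 * ... * p_t be a squarefree integer which is a product of t >= 3 distinct primes. Set g(N) = gcd(N + (-1)^{t-1}, p_1^2 - 1, ..., p_t^2 - 1) and, for each index i, set s_i(N) = (p_i + 1) * prod_{j != i} (p_j - 1). Then 2 * g(N) divides s_i(N) for every i with 1 <= i <= t. -/
/-!
Negate `p_i`: with `x_i = -p_i` and `x_j = p_j` otherwise, `s_i(N) = -∏ (x_j - 1)`, every
`x_j² ≡ 1` and `∏ x_j ≡ -(-1)^t` modulo `g = g(N)`. Then `∏ x_j · ∏ (x_j - 1) = ∏ (x_j² - x_j)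
≡ (-1)^t ∏ (x_j - 1)`, which forces `g ∣ 2 ∏ (x_j - 1)` and settles the odd part of `g`.
For the `2`-part, let `2^(a+1) ∣ g`: each odd `x_j` is `≡ ±1 mod 2^a`, and they cannot all be
`≡ -1` because of the sign of their product, so one factor `x_j - 1` is divisible by `2^a` and
the at least two remaining factors are even.
-/

lemma Int.two_mul_dvd_of_dvd_two_mul {d s : ℤ} (h : d ∣ 2 * s)
    (h2 : ∀ a, 2 ^ a ∣ d → 2 ^ (a + 1) ∣ s) : 2 * d ∣ s := by
  rcases eq_or_ne d 0 with rfl | hd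
  · simpa using h
  obtain ⟨a, m, hm, hdm⟩ := Nat.exists_eq_two_pow_mul_odd (Int.natAbs_ne_zero.2 hd)
  have hm2 : IsCoprime (m : ℤ) 2 := Int.isCoprime_two_right.2 (by exact_mod_cast hm)
  have hmd : (m : ℤ) ∣ d := Int.natCast_dvd.2 (hdm ▸ dvd_mul_left m _)
  have h2d : (2 : ℤ) ^ a ∣ d := by exact_mod_cast Int.natCast_dvd.2 (hdm ▸ dvd_mul_right _ m)
  have hs := hm2.pow_right.symm.mul_dvd (h2 a h2d) (hm2.dvd_of_dvd_mul_left (hmd.trans h))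
  rw [← Int.natAbs_dvd, Int.natAbs_mul, hdm]
  push_cast
  rwa [← mul_assoc, ← pow_succ']

section

open Finset

variable {ι : Type*} [Fintype ι]

lemma two_mul_prod_sub_one_eq_zero {R : Type*} [CommRing R] (x : ι → R)
    (hsq : ∀ j, x j ^ 2 = 1) (hprod : ∏ j, x j = -(-1) ^ Fintype.card ι) :
    2 * ∏ j, (x j - 1) = 0 := by
  have hmul : (∏ j, x j) * ∏ j, (x j - 1) = (-1) ^ Fintype.card ι * ∏ j, (x j - 1) := by
    rw [← prod_mul_distrib, ← card_univ, ← prod_neg]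
    exact prod_congr rfl fun j _ => by linear_combination hsq j
  have hsign : ((-1 : R) ^ Fintype.card ι) ^ 2 = 1 := by
    rw [← pow_mul, mul_comm, pow_mul, neg_one_sq, one_pow]
  rw [hprod] at hmul
  linear_combination (-(-1) ^ Fintype.card ι) * hmul - 2 * (∏ j, (x j - 1)) * hsign

lemma dvd_two_mul_prod_sub_one {d : ℤ} (x : ι → ℤ) (hsq : ∀ j, d ∣ x j ^ 2 - 1)
    (hprod : d ∣ ∏ j, x j + (-1) ^ Fintype.card ι) : d ∣ 2 * ∏ j, (x j - 1) := by
  set π := Ideal.Quotient.mk (Ideal.span {d})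
  have hzero : ∀ y, π y = 0 ↔ d ∣ y := Ideal.Quotient.eq_zero_iff_dvd d
  rw [← hzero]
  simp only [map_mul, map_prod, map_sub, map_one, map_ofNat]
  refine two_mul_prod_sub_one_eq_zero (fun j => π (x j)) (fun j => ?_) ?_
  · have := (hzero _).2 (hsq j)
    rw [map_sub, map_pow, map_one] at this
    exact sub_eq_zero.1 this
  · have := (hzero _).2 hprod
    rw [map_add, map_prod, map_pow, map_neg, map_one] at this
    exact eq_neg_of_add_eq_zero_left this

lemma two_pow_dvd_sub_one_or_add_one {a : ℕ} {x : ℤ} (hx : Odd x)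
    (h : 2 ^ (a + 1) ∣ x ^ 2 - 1) : 2 ^ a ∣ x - 1 ∨ 2 ^ a ∣ x + 1 := by
  obtain ⟨b, rfl⟩ := hx
  cases a with
  | zero => simp
  | succ a =>
    have hb : 2 ^ a ∣ b * (b + 1) := by
      refine (mul_dvd_mul_iff_left (four_ne_zero (α := ℤ))).1 ?_
      rwa [show (2 : ℤ) ^ (a + 1 + 1) = 4 * 2 ^ a by ring,
        show (2 * b + 1) ^ 2 - 1 = 4 * (b * (b + 1)) by ring] at h
    rw [pow_succ', add_sub_cancel_right, add_assoc, one_add_one_eq_two, ← mul_add_one]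
    rcases Int.even_or_odd b with hb2 | hb2
    · left
      exact mul_dvd_mul_left 2
        ((Int.isCoprime_two_left.2 hb2.add_one).pow_left.dvd_of_dvd_mul_right hb)
    · right
      exact mul_dvd_mul_left 2 ((Int.isCoprime_two_left.2 hb2).pow_left.dvd_of_dvd_mul_left hb)

lemma exists_two_pow_dvd_sub_one [Nonempty ι] {a : ℕ} (x : ι → ℤ) (hodd : ∀ j, Odd (x j))
    (hsq : ∀ j, 2 ^ (a + 1) ∣ x j ^ 2 - 1)
    (hprod : 2 ^ (a + 1) ∣ ∏ j, x j + (-1) ^ Fintype.card ι) : ∃ j, 2 ^ a ∣ x j - 1 := by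
  by_cases ha : a ≤ 1
  · obtain ⟨j⟩ := ‹Nonempty ι›
    exact ⟨j, (pow_dvd_pow 2 ha).trans ((hodd j).sub_odd odd_one).two_dvd⟩
  -- If all `x j ≡ -1`, their product is `≡ (-1)^card`, yet also `≡ -(-1)^card`, so `2^a ∣ 2`.
  by_contra! hne
  have hneg : ∀ j, x j ≡ -1 [ZMOD 2 ^ a] := fun j => by
    refine (Int.modEq_iff_dvd.2 ?_).symm
    rw [sub_neg_eq_add]
    exact (two_pow_dvd_sub_one_or_add_one (hodd j) (hsq j)).resolve_left (hne j)
  have hprod_neg : ∏ j, x j ≡ (-1) ^ Fintype.card ι [ZMOD 2 ^ a] := by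
    simpa using Int.ModEq.prod fun j (_ : j ∈ univ) => hneg j
  have hprod_pos : ∏ j, x j ≡ -(-1) ^ Fintype.card ι [ZMOD 2 ^ a] := by
    refine (Int.modEq_iff_dvd.2 ?_).symm
    rw [sub_neg_eq_add]
    exact (pow_dvd_pow 2 a.le_succ).trans hprod
  have h2 : (2 : ℤ) ^ a ∣ 2 := by
    have := (hprod_neg.symm.trans hprod_pos).dvd
    rcases neg_one_pow_eq_or ℤ (Fintype.card ι) with h | h <;> rw [h] at this <;> norm_num at this
      <;> exact this
  have h4 := (pow_dvd_pow 2 (not_le.1 ha)).trans h2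
  norm_num at h4

lemma two_pow_dvd_prod_sub_one (hι : 3 ≤ Fintype.card ι) {a : ℕ} (x : ι → ℤ)
    (hodd : ∃ j, Odd (x j)) (hsq : ∀ j, 2 ^ a ∣ x j ^ 2 - 1)
    (hprod : 2 ^ a ∣ ∏ j, x j + (-1) ^ Fintype.card ι) : 2 ^ (a + 1) ∣ ∏ j, (x j - 1) := by
  obtain ⟨j₀, hj₀⟩ := hodd
  cases a with
  | zero => exact (hj₀.sub_odd odd_one).two_dvd.trans (dvd_prod_of_mem _ (mem_univ j₀))
  | succ a =>
    have hodd_all : ∀ j, Odd (x j) := fun j => by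
      have : Even (x j ^ 2 - 1) :=
        even_iff_two_dvd.2 ((dvd_pow_self 2 a.succ_ne_zero).trans (hsq j))
      simpa [parity_simps] using this
    classical
    have : Nonempty ι := ⟨j₀⟩
    obtain ⟨j₁, hj₁⟩ := exists_two_pow_dvd_sub_one x hodd_all hsq hprod
    have hrest : 2 ^ 2 ∣ ∏ j ∈ univ.erase j₁, (x j - 1) := by
      have hcard : 2 ≤ #(univ.erase j₁) := by
        rw [card_erase_of_mem (mem_univ j₁), card_univ]; omega
      refine (pow_dvd_pow 2 hcard).trans ?_
      simpa using prod_dvd_prod_of_dvd (s := univ.erase j₁) (fun _ => (2 : ℤ)) _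
        fun j _ => ((hodd_all j).sub_odd odd_one).two_dvd
    rw [← mul_prod_erase univ _ (mem_univ j₁), add_assoc, one_add_one_eq_two, pow_add]
    exact mul_dvd_mul hj₁ hrest

theorem two_mul_dvd_prod_sub_one (hι : 3 ≤ Fintype.card ι) (x : ι → ℤ)
    (hodd : ∃ j, Odd (x j)) {d : ℤ} (hsq : ∀ j, d ∣ x j ^ 2 - 1)
    (hprod : d ∣ ∏ j, x j + (-1) ^ Fintype.card ι) : 2 * d ∣ ∏ j, (x j - 1) :=
  Int.two_mul_dvd_of_dvd_two_mul (dvd_two_mul_prod_sub_one x hsq hprod) fun _ ha =>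
    two_pow_dvd_prod_sub_one hι x hodd (fun j => ha.trans (hsq j)) (ha.trans hprod)

theorem two_mul_dvd_add_one_mul_prod_erase_sub_one [DecidableEq ι] (hι : 3 ≤ Fintype.card ι)
    (y : ι → ℤ) (hodd : ∃ j, Odd (y j)) {d : ℤ} (hsq : ∀ j, d ∣ y j ^ 2 - 1)
    (hprod : d ∣ ∏ j, y j - (-1) ^ Fintype.card ι) (i : ι) :
    2 * d ∣ (y i + 1) * ∏ j ∈ univ.erase i, (y j - 1) := by
  set x := Function.update y i (-y i)
  have hx_self : x i = -y i := Function.update_self ..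
  have hx_ne : ∀ j ∈ univ.erase i, x j = y j := fun j hj =>
    Function.update_of_ne (ne_of_mem_erase hj) ..
  have hx_sq : ∀ j, x j ^ 2 = y j ^ 2 := fun j => by
    rcases eq_or_ne j i with rfl | hj
    · rw [hx_self, neg_sq]
    · rw [hx_ne j (mem_erase.2 ⟨hj, mem_univ j⟩)]
  have hprod_x : ∏ j, x j = -∏ j, y j := by
    rw [← mul_prod_erase _ x (mem_univ i), ← mul_prod_erase _ y (mem_univ i),
      prod_congr rfl hx_ne, hx_self, neg_mul]
  have hs : ∏ j, (x j - 1) = -((y i + 1) * ∏ j ∈ univ.erase i, (y j - 1)) := by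
    rw [← mul_prod_erase _ _ (mem_univ i), prod_congr rfl fun j hj => by rw [hx_ne j hj],
      hx_self]
    ring
  rw [← dvd_neg, ← hs]
  refine two_mul_dvd_prod_sub_one hι x ?_ (fun j => hx_sq j ▸ hsq j) ?_
  · obtain ⟨j, hj⟩ := hodd
    exact ⟨j, by rwa [← Int.odd_pow' two_ne_zero, hx_sq, Int.odd_pow' two_ne_zero]⟩
  · rwa [hprod_x, neg_add_eq_sub, ← neg_sub, dvd_neg]

end

/-- Lemma 3.20: Let `N = p_1 ⋯ p_t` be squarefree with `t ≥ 3` distinct prime factors.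
With `g(N) = gcd(N + (-1)^(t-1), p_i^2 - 1 : 1 ≤ i ≤ t)` and
`s_i(N) = (p_i + 1) * ∏_{j ≠ i} (p_j - 1)`, we have `2 * g(N) ∣ s_i(N)` for all `i`. -/
theorem two_mul_gcd_dvd (t : ℕ) (ht : 3 ≤ t) (p : Fin t → ℕ)
    (hp : ∀ i, (p i).Prime) (hinj : Function.Injective p) (i : Fin t) :
    2 * gcd ((∏ j, (p j : ℤ)) + (-1) ^ (t - 1))
        (Finset.univ.gcd fun j => (p j : ℤ) ^ 2 - 1) ∣
      ((p i : ℤ) + 1) * ∏ j ∈ Finset.univ.erase i, ((p j : ℤ) - 1) := by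
  have hodd : ∃ j, Odd (p j : ℤ) := by
    obtain ⟨j, hj⟩ : ∃ j, p j ≠ 2 := by
      by_contra! h
      exact absurd (hinj ((h ⟨0, by omega⟩).trans (h ⟨1, by omega⟩).symm)) (by simp)
    exact ⟨j, by exact_mod_cast (hp j).odd_of_ne_two hj⟩
  have hsign : (-1 : ℤ) ^ t = -(-1) ^ (t - 1) := by
    conv_lhs => rw [← Nat.sub_add_cancel (by omega : 1 ≤ t), pow_succ]
    ring
  refine two_mul_dvd_add_one_mul_prod_erase_sub_one (by simpa using ht) _ hodd
    (fun j => (gcd_dvd_right _ _).trans (Finset.gcd_dvd (Finset.mem_univ j))) ?_ i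
  rw [Fintype.card_fin, hsign, sub_neg_eq_add]
  exact gcd_dvd_left _ _
end

section
/- Let N = p_1 * ... * p_t be a squarefree integer which is a product of t >= 3 distinct primes. Then the greatest common divisor of the integers N/delta + (-1)^{t-1} * delta, taken over all positive divisors delta of N, equals gcd(N + (-1)^{t-1}, p_1^2 - 1, ..., p_t^2 - 1). -/
/-!
Put `F d = N / d + ε d` with `ε = ±1`. For `d ∣ N` one has `d * F d = N + ε d²`, so
`F 1 = N + ε` and `p² - 1 = ε (p F p - F 1)` show that the gcd of the `F d` divides the right-hand
side `H`. Conversely `H` divides `q² - 1` for every prime `q ∣ N`, hence, by multiplicativity,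
`d² - 1` for every divisor `d`; thus `H` is coprime to `d` and divides
`d F d = (N + ε) + ε (d² - 1)`, so `H ∣ F d`.
-/

theorem dvd_sq_sub_one_mul {R : Type*} [CommRing R] {h a b : R} (ha : h ∣ a ^ 2 - 1)
    (hb : h ∣ b ^ 2 - 1) : h ∣ (a * b) ^ 2 - 1 := by
  have hab : (a * b) ^ 2 - 1 = a ^ 2 * (b ^ 2 - 1) + (a ^ 2 - 1) := by ring
  rw [hab]
  exact dvd_add (hb.mul_left _) ha

theorem Nat.dvd_sq_sub_one_of_forall_mem_primeFactors {h : ℤ} {d : ℕ} (hd : d ≠ 0)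
    (hprime : ∀ q ∈ d.primeFactors, h ∣ (q : ℤ) ^ 2 - 1) : h ∣ (d : ℤ) ^ 2 - 1 := by
  rw [← Nat.prod_primeFactorsList hd]
  refine List.prod_induction (fun x : ℕ => h ∣ (x : ℤ) ^ 2 - 1) ?_ (by simp) ?_
  · intro a b ha hb
    rw [Nat.cast_mul]
    exact dvd_sq_sub_one_mul ha hb
  · intro q hq
    exact hprime q (Nat.mem_primeFactors_iff_mem_primeFactorsList.2 hq)

theorem Nat.primeFactors_prod_of_prime {ι : Type*} (s : Finset ι) (p : ι → ℕ)
    (hp : ∀ i ∈ s, (p i).Prime) : (∏ i ∈ s, p i).primeFactors = s.image p := by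
  ext q
  simp only [Nat.mem_primeFactors, Finset.mem_image]
  constructor
  · rintro ⟨hq, hdvd, -⟩
    obtain ⟨i, hi, hqi⟩ := (Prime.dvd_finsetProd_iff hq.prime _).1 hdvd
    exact ⟨i, hi, ((Nat.prime_dvd_prime_iff_eq hq (hp i hi)).1 hqi).symm⟩
  · rintro ⟨i, hi, rfl⟩
    exact ⟨hp i hi, Finset.dvd_prod_of_mem p hi,
      Finset.prod_ne_zero_iff.2 fun j hj => (hp j hj).ne_zero⟩

section DivisorGcd

variable {N : ℕ} {ε : ℤ}

theorem mul_div_add_mul_eq {d : ℕ} (hd : d ∣ N) :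
    (d : ℤ) * (((N / d : ℕ) : ℤ) + ε * d) = N + ε * (d : ℤ) ^ 2 := by
  have hN : (d : ℤ) * ((N / d : ℕ) : ℤ) = N := by exact_mod_cast Nat.mul_div_cancel' hd
  linear_combination hN

theorem gcd_divisors_div_add_mul_dvd (hN : N ≠ 0) (hε : ε * ε = 1) :
    N.divisors.gcd (fun d => ((N / d : ℕ) : ℤ) + ε * d) ∣
      gcd ((N : ℤ) + ε) (N.primeFactors.gcd fun q => (q : ℤ) ^ 2 - 1) := by
  set F : ℕ → ℤ := fun d => ((N / d : ℕ) : ℤ) + ε * d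
  have hF1 : N.divisors.gcd F ∣ N + ε := by
    simpa [F] using Finset.gcd_dvd (f := F) (Nat.one_mem_divisors.2 hN)
  refine dvd_gcd hF1 (Finset.dvd_gcd fun q hq => ?_)
  have hqN : q ∣ N := Nat.dvd_of_mem_primeFactors hq
  have hFq : N.divisors.gcd F ∣ F q := Finset.gcd_dvd (Nat.mem_divisors.2 ⟨hqN, hN⟩)
  have hq2 : (q : ℤ) ^ 2 - 1 = ε * ((q : ℤ) * F q) - ε * (N + ε) := by
    rw [mul_div_add_mul_eq hqN]
    linear_combination -((q : ℤ) ^ 2 - 1) * hε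
  rw [hq2]
  exact dvd_sub ((hFq.mul_left _).mul_left ε) (hF1.mul_left ε)

theorem dvd_gcd_divisors_div_add_mul :
    gcd ((N : ℤ) + ε) (N.primeFactors.gcd fun q => (q : ℤ) ^ 2 - 1) ∣
      N.divisors.gcd (fun d => ((N / d : ℕ) : ℤ) + ε * d) := by
  set H := gcd ((N : ℤ) + ε) (N.primeFactors.gcd fun q => (q : ℤ) ^ 2 - 1)
  refine Finset.dvd_gcd fun d hd => ?_
  obtain ⟨hdN, hN⟩ := Nat.mem_divisors.1 hd
  have hd2 : H ∣ (d : ℤ) ^ 2 - 1 :=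
    Nat.dvd_sq_sub_one_of_forall_mem_primeFactors (ne_zero_of_dvd_ne_zero hN hdN) fun q hq =>
      (gcd_dvd_right _ _).trans <| Finset.gcd_dvd <| Nat.primeFactors_mono hdN hN hq
  have hcop : IsCoprime H d := by
    obtain ⟨k, hk⟩ := hd2
    exact ⟨-k, d, by linear_combination hk⟩
  refine hcop.dvd_of_dvd_mul_left ?_
  rw [mul_div_add_mul_eq hdN, show (N : ℤ) + ε * d ^ 2 = N + ε + ε * (d ^ 2 - 1) by ring]
  exact dvd_add (gcd_dvd_left _ _) (hd2.mul_left ε)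

theorem gcd_divisors_div_add_mul_eq (hN : N ≠ 0) (hε : ε * ε = 1) :
    N.divisors.gcd (fun d => ((N / d : ℕ) : ℤ) + ε * d) =
      gcd ((N : ℤ) + ε) (N.primeFactors.gcd fun q => (q : ℤ) ^ 2 - 1) :=
  dvd_antisymm_of_normalize_eq Finset.normalize_gcd (normalize_gcd _ _)
    (gcd_divisors_div_add_mul_dvd hN hε) dvd_gcd_divisors_div_add_mul

end DivisorGcd

theorem gcd_divisors_eq_general (t : ℕ) (p : Fin t → ℕ)
    (hp : ∀ i, (p i).Prime)
    (N : ℕ) (hN : N = ∏ j, p j) :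
    N.divisors.gcd (fun d => ((N / d : ℕ) : ℤ) + (-1) ^ (t - 1) * (d : ℤ)) =
      gcd ((N : ℤ) + (-1) ^ (t - 1)) (Finset.univ.gcd fun j => (p j : ℤ) ^ 2 - 1) := by
  have hN0 : N ≠ 0 := hN ▸ Finset.prod_ne_zero_iff.2 fun j _ => (hp j).ne_zero
  have hε : ((-1) ^ (t - 1) : ℤ) * (-1) ^ (t - 1) = 1 := by rw [← mul_pow]; norm_num
  rw [gcd_divisors_div_add_mul_eq hN0 hε, hN,
    Nat.primeFactors_prod_of_prime _ p fun i _ => hp i, Finset.gcd_image]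
  rfl

/-- For `N = p_1 ⋯ p_t` squarefree with `t ≥ 3` distinct prime factors, the gcd of the
integers `N/δ + (-1)^(t-1) δ` over all positive divisors `δ` of `N` equals
`gcd(N + (-1)^(t-1), p_i^2 - 1 : 1 ≤ i ≤ t)`. -/
theorem gcd_divisors_eq (t : ℕ) (ht : 3 ≤ t) (p : Fin t → ℕ)
    (hp : ∀ i, (p i).Prime) (hinj : Function.Injective p)
    (N : ℕ) (hN : N = ∏ j, p j) :
    N.divisors.gcd (fun d => ((N / d : ℕ) : ℤ) + (-1) ^ (t - 1) * (d : ℤ)) =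
      gcd ((N : ℤ) + (-1) ^ (t - 1)) (Finset.univ.gcd fun j => (p j : ℤ) ^ 2 - 1) :=
  gcd_divisors_eq_general t p hp N hN
end

section
/- For a positive integer N, define kappa(N) = (N / rad(N)) * prod_{p | N} (p^2 - 1), where rad(N) is the product of the distinct primes dividing N (with kappa(1) = 1). Then 24 divides kappa(N) if and only if N is not one of 1, 2, 3, 4, 8. -/
/-!
Every prime `p ≥ 5` satisfies `p² ≡ 1 (mod 24)`, and `p² - 1` divides `κ(N)` for each prime
`p ∣ N`; likewise `(2² - 1)(3² - 1) = 24` divides `κ(N)` when `6 ∣ N`. What remains are the prime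
powers `N = 2^k` and `N = 3^k`, where `κ(N) = 3 · 2^(k-1)` and `κ(N) = 8 · 3^(k-1)` are divisible
by 24 exactly when `k ≥ 4`, respectively `k ≥ 2`.
-/

def kappa (N : ℕ) : ℕ :=
  (N / ∏ p ∈ N.primeFactors, p) * ∏ p ∈ N.primeFactors, (p ^ 2 - 1)

theorem Nat.Prime.twentyFour_dvd_sq_sub_one {p : ℕ} (hp : p.Prime) (h5 : 5 ≤ p) :
    24 ∣ p ^ 2 - 1 := by
  have h2 : p % 2 = 1 := hp.mod_two_eq_one_iff_ne_two.mpr (by omega)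
  have h3 : p % 3 ≠ 0 := fun h => by
    have := (Nat.prime_dvd_prime_iff_eq Nat.prime_three hp).mp (Nat.dvd_of_mod_eq_zero h)
    omega
  have hsq : p ^ 2 % 24 = 1 := by
    rw [Nat.pow_mod]
    have : p % 24 < 24 := Nat.mod_lt _ (by norm_num)
    interval_cases h : p % 24 <;> omega
  omega

theorem prod_sq_sub_one_dvd_kappa {N : ℕ} {s : Finset ℕ} (hs : s ⊆ N.primeFactors) :
    ∏ p ∈ s, (p ^ 2 - 1) ∣ kappa N :=
  (Finset.prod_dvd_prod_of_subset _ _ _ hs).mul_left _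

theorem kappa_prime_pow {p k : ℕ} (hp : p.Prime) (hk : k ≠ 0) :
    kappa (p ^ k) = p ^ (k - 1) * (p ^ 2 - 1) := by
  rw [kappa, Nat.primeFactors_prime_pow hk hp, Finset.prod_singleton, Finset.prod_singleton,
    ← Nat.pow_div (Nat.one_le_iff_ne_zero.mpr hk) hp.pos, pow_one]

theorem twentyFour_dvd_kappa_two_pow {k : ℕ} (hk : 4 ≤ k) : 24 ∣ kappa (2 ^ k) := by
  rw [kappa_prime_pow Nat.prime_two (by omega)]
  exact mul_dvd_mul_right (pow_dvd_pow 2 (by omega : 3 ≤ k - 1)) 3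

theorem twentyFour_dvd_kappa_three_pow {k : ℕ} (hk : 2 ≤ k) : 24 ∣ kappa (3 ^ k) := by
  rw [kappa_prime_pow Nat.prime_three (by omega)]
  exact mul_dvd_mul_right (pow_dvd_pow 3 (by omega : 1 ≤ k - 1)) 8

theorem exists_eq_pow_of_primeFactors_subset_singleton {N p : ℕ} (hN : N ≠ 0)
    (h : N.primeFactors ⊆ {p}) : ∃ k, N = p ^ k :=
  ⟨_, Nat.eq_prime_pow_of_unique_prime_dvd hN fun hd hdN =>
    Finset.mem_singleton.mp (h (Nat.mem_primeFactors.mpr ⟨hd, hdN, hN⟩))⟩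

theorem twentyFour_dvd_kappa_of_ne_pow {N : ℕ} (hN : N ≠ 0) (h2 : ∀ k, N ≠ 2 ^ k)
    (h3 : ∀ k, N ≠ 3 ^ k) : 24 ∣ kappa N := by
  by_cases hlarge : ∃ p ∈ N.primeFactors, 5 ≤ p
  · obtain ⟨p, hp, hp5⟩ := hlarge
    exact ((Nat.prime_of_mem_primeFactors hp).twentyFour_dvd_sq_sub_one hp5).trans
      (by simpa using prod_sq_sub_one_dvd_kappa (Finset.singleton_subset_iff.mpr hp))
  by_cases h6 : {2, 3} ⊆ N.primeFactors
  · simpa using prod_sq_sub_one_dvd_kappa h6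
  push Not at hlarge
  have hsmall : ∀ p ∈ N.primeFactors, p = 2 ∨ p = 3 := fun p hp =>
    (by decide : ∀ q < 5, q.Prime → q = 2 ∨ q = 3) p (hlarge p hp)
      (Nat.prime_of_mem_primeFactors hp)
  have hpow : N.primeFactors ⊆ {2} ∨ N.primeFactors ⊆ {3} := by
    simp only [Finset.subset_iff, Finset.mem_singleton] at h6 ⊢
    grind
  rcases hpow with h | h
  · exact absurd (exists_eq_pow_of_primeFactors_subset_singleton hN h) (not_exists.mpr h2)
  · exact absurd (exists_eq_pow_of_primeFactors_subset_singleton hN h) (not_exists.mpr h3)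

theorem twentyFour_dvd_kappa_of_notMem {N : ℕ} (hN : N ∉ ({1, 2, 3, 4, 8} : Finset ℕ)) :
    24 ∣ kappa N := by
  rcases eq_or_ne N 0 with rfl | hN0
  · simp [kappa]
  by_cases h2 : ∃ k, N = 2 ^ k
  · obtain ⟨k, rfl⟩ := h2
    refine twentyFour_dvd_kappa_two_pow (by_contra fun hk => hN ?_)
    interval_cases k <;> simp
  by_cases h3 : ∃ k, N = 3 ^ k
  · obtain ⟨k, rfl⟩ := h3
    refine twentyFour_dvd_kappa_three_pow (by_contra fun hk => hN ?_)
    interval_cases k <;> simp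
  push Not at h2 h3
  exact twentyFour_dvd_kappa_of_ne_pow hN0 h2 h3

theorem not_twentyFour_dvd_kappa_of_mem {N : ℕ} (hN : N ∈ ({1, 2, 3, 4, 8} : Finset ℕ)) :
    ¬ 24 ∣ kappa N := by
  fin_cases hN <;> simp [kappa, Nat.primeFactors]

theorem twentyFour_dvd_kappa_iff_general (N : ℕ) :
    24 ∣ (N / ∏ p ∈ N.primeFactors, p) * ∏ p ∈ N.primeFactors, (p ^ 2 - 1) ↔
      N ∉ ({1, 2, 3, 4, 8} : Finset ℕ) :=
  ⟨fun h hN => not_twentyFour_dvd_kappa_of_mem hN h, twentyFour_dvd_kappa_of_notMem⟩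

/-- Remark 3.12: `24 ∣ κ(N)` if and only if `N ∉ {1, 2, 3, 4, 8}`, where
`κ(N) = (N / rad(N)) * ∏_{p ∣ N} (p^2 - 1)`. -/
theorem twentyFour_dvd_kappa_iff (N : ℕ) (hN : 0 < N) :
    24 ∣ (N / ∏ p ∈ N.primeFactors, p) * ∏ p ∈ N.primeFactors, (p ^ 2 - 1) ↔
      N ∉ ({1, 2, 3, 4, 8} : Finset ℕ) :=
  twentyFour_dvd_kappa_iff_general N
end

section
/- Let N be a positive integer and let d, d' be positive divisors of N. Let x, x' be integers with gcd(x, d) = 1 and gcd(x', d') = 1. Suppose there exist integers r, u, v, w with r*w - N*v*u = 1 such that r*x + u*d = x' and N*v*x + w*d = d'. Then d = d' and x is congruent to x' modulo gcd(d, N/d). -/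
/-!
The bottom entry of `γ • (x, d)` for `γ = [[r, u], [N v, w]] ∈ Γ₀(N)` is `N v x + w d`, which is
divisible by any divisor `d` of `N`; applying this to `γ` and to `γ⁻¹ ∈ Γ₀(N)` gives `d ∣ d'` and
`d' ∣ d`. Once `d' = d`, cancelling `d` in the bottom row leaves `(N/d) v x + w = 1`, and the
determinant then forces `r ≡ 1 mod N/d`; hence `x' = r x + u d ≡ x` modulo `gcd(d, N/d)`.
-/

theorem dvd_of_dvd_level {R : Type*} [CommSemiring R] {N v w x d d' : R} (hd : d ∣ N)
    (h : N * v * x + w * d = d') : d ∣ d' :=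
  h ▸ dvd_add ((hd.mul_right v).mul_right x) (dvd_mul_left d w)

theorem gamma0_inv_apply {R : Type*} [CommRing R] {N r u v w x y x' y' : R}
    (hdet : r * w - N * v * u = 1) (h1 : r * x + u * y = x') (h2 : N * v * x + w * y = y') :
    N * -v * x' + r * y' = y := by
  linear_combination N * v * h1 - r * h2 + y * hdet

theorem dvd_sub_one_of_gamma0_fixes_bottom {R : Type*} [CommRing R] [IsDomain R]
    {d m r u v w x : R} (hd : d ≠ 0) (hdet : r * w - d * m * v * u = 1)
    (h2 : d * m * v * x + w * d = d) : m ∣ r - 1 := by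
  have hw : m * v * x + w = 1 := mul_left_cancel₀ hd (by linear_combination h2)
  exact ⟨r * v * x + d * v * u, by linear_combination hdet - r * hw⟩

theorem modEq_of_dvd_sub_one {g m d r u x x' : ℤ} (hgm : g ∣ m) (hgd : g ∣ d) (hr : m ∣ r - 1)
    (h1 : r * x + u * d = x') : x ≡ x' [ZMOD g] := by
  have hr1 : r ≡ 1 [ZMOD g] := (Int.modEq_iff_dvd.mpr (hgm.trans hr)).symm
  have hd0 : d ≡ 0 [ZMOD g] := Int.modEq_zero_iff_dvd.mpr hgd
  simpa [← h1] using ((hr1.mul_right x).add (hd0.mul_left u)).symm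

theorem cusp_equiv_level_and_mod_general (N : ℕ) (hN : 0 < N) (d d' : ℕ)
    (hd : d ∣ N) (hd' : d' ∣ N) (x x' : ℤ)
    (r u v w : ℤ) (hdet : r * w - (N : ℤ) * v * u = 1)
    (h1 : r * x + u * (d : ℤ) = x') (h2 : (N : ℤ) * v * x + w * (d : ℤ) = (d' : ℤ)) :
    d = d' ∧ Int.ModEq ((Nat.gcd d (N / d) : ℤ)) x x' := by
  have hd0 : (d : ℤ) ≠ 0 := by exact_mod_cast (Nat.pos_of_dvd_of_pos hd hN).ne'
  have hdd' : d ∣ d' :=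
    Int.natCast_dvd_natCast.mp (dvd_of_dvd_level (Int.natCast_dvd_natCast.mpr hd) h2)
  have hd'd : d' ∣ d := Int.natCast_dvd_natCast.mp
    (dvd_of_dvd_level (Int.natCast_dvd_natCast.mpr hd') (gamma0_inv_apply hdet h1 h2))
  obtain rfl := Nat.dvd_antisymm hdd' hd'd
  refine ⟨rfl, ?_⟩
  have hN_eq : (N : ℤ) = d * (N / d : ℕ) := by exact_mod_cast (Nat.mul_div_cancel' hd).symm
  rw [hN_eq] at hdet h2
  exact modEq_of_dvd_sub_one (Int.natCast_dvd_natCast.mpr (Nat.gcd_dvd_right _ _))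
    (Int.natCast_dvd_natCast.mpr (Nat.gcd_dvd_left _ _))
    (dvd_sub_one_of_gamma0_fixes_bottom hd0 hdet h2) h1

/-- Theorem 2.2 (one direction): if an element of `Γ₀(N)` maps `(x, d)` to `(x', d')`
with `d, d'` positive divisors of `N`, `gcd(x, d) = 1` and `gcd(x', d') = 1`, then
`d = d'` and `x ≡ x' (mod gcd(d, N/d))`. -/
theorem cusp_equiv_level_and_mod (N : ℕ) (hN : 0 < N) (d d' : ℕ)
    (hd : d ∣ N) (hd' : d' ∣ N) (x x' : ℤ)
    (hx : Int.gcd x (d : ℤ) = 1) (hx' : Int.gcd x' (d' : ℤ) = 1)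
    (r u v w : ℤ) (hdet : r * w - (N : ℤ) * v * u = 1)
    (h1 : r * x + u * (d : ℤ) = x') (h2 : (N : ℤ) * v * x + w * (d : ℤ) = (d' : ℤ)) :
    d = d' ∧ Int.ModEq ((Nat.gcd d (N / d) : ℤ)) x x' :=
  cusp_equiv_level_and_mod_general N hN d d' hd hd' x x' r u v w hdet h1 h2
end

section
/- Let N be a positive integer, d a positive divisor of N, and z = gcd(d, N/d). Let x and x' be integers with gcd(x, d) = gcd(x', d) = 1 and x congruent to x' modulo z. Then there exist integers r, u, v, w with r*w - N*v*u = 1, r*x + u*d = x', and N*v*x + w*d = d. In other words, (x, d) and (x', d) lie in the same Gamma_0(N)-orbit. -/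
/-!
Write `N = d m`. If `d u = x' - x - m v x x'`, the matrix `[[1 + m v x', u], [N v, 1 - m v x]]`
has determinant `1` and sends `(x, d)` to `(x', d)`. Such `u, v` exist because `x x'` is a unit
mod `d` and `m v ≡ x' - x (mod d)` is solvable, `gcd(d, m)` dividing `x' - x`.
-/

namespace Int

theorem exists_mul_modEq_of_gcd_dvd {d m c : ℤ} (h : (gcd d m : ℤ) ∣ c) :
    ∃ k, m * k ≡ c [ZMOD d] := by
  obtain ⟨t, rfl⟩ := h
  exact ⟨gcdB d m * t, modEq_iff_dvd.2 ⟨gcdA d m * t, by rw [gcd_eq_gcd_ab]; ring⟩⟩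

theorem exists_mul_mul_modEq_of_gcd_dvd {d m a c : ℤ} (ha : IsCoprime a d)
    (h : (gcd d m : ℤ) ∣ c) : ∃ v, m * v * a ≡ c [ZMOD d] := by
  obtain ⟨k, hk⟩ := exists_mul_modEq_of_gcd_dvd h
  obtain ⟨b, e, hbe⟩ := ha
  refine ⟨k * b, (modEq_iff_dvd.2 ⟨m * k * e, ?_⟩).trans hk⟩
  linear_combination -(m * k) * hbe

end Int

theorem exists_Gamma0_mapsTo_of_modEq {N d m v x x' : ℤ} (hN : N = d * m)
    (hv : m * v * (x * x') ≡ x' - x [ZMOD d]) :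
    ∃ r u w : ℤ, r * w - N * v * u = 1 ∧ r * x + u * d = x' ∧ N * v * x + w * d = d := by
  obtain ⟨u, hu⟩ := Int.modEq_iff_dvd.1 hv
  subst hN
  refine ⟨1 + m * v * x', u, 1 - m * v * x, ?_, ?_, ?_⟩
  · linear_combination (m * v) * hu
  · linear_combination -hu
  · ring

theorem cusp_equiv_of_mod_general (N : ℕ) (d : ℕ) (hd : d ∣ N)
    (x x' : ℤ) (hx : Int.gcd x (d : ℤ) = 1) (hx' : Int.gcd x' (d : ℤ) = 1)
    (hmod : Int.ModEq ((Nat.gcd d (N / d) : ℤ)) x x') :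
    ∃ r u v w : ℤ, r * w - (N : ℤ) * v * u = 1 ∧
      r * x + u * (d : ℤ) = x' ∧ (N : ℤ) * v * x + w * (d : ℤ) = (d : ℤ) := by
  have hN : (N : ℤ) = d * (N / d : ℕ) := by exact_mod_cast (Nat.mul_div_cancel' hd).symm
  have hgcd : (Int.gcd d (N / d : ℕ) : ℤ) ∣ x' - x := by
    rw [Int.gcd_natCast_natCast]
    exact hmod.dvd
  have hxx' : IsCoprime (x * x') d :=
    (Int.isCoprime_iff_gcd_eq_one.2 hx).mul_left (Int.isCoprime_iff_gcd_eq_one.2 hx')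
  obtain ⟨v, hv⟩ := Int.exists_mul_mul_modEq_of_gcd_dvd hxx' hgcd
  obtain ⟨r, u, w, h⟩ := exists_Gamma0_mapsTo_of_modEq hN hv
  exact ⟨r, u, v, w, h⟩

/-- Theorem 2.2 (converse direction): if `x ≡ x' (mod gcd(d, N/d))` with
`gcd(x, d) = gcd(x', d) = 1`, then `(x, d)` and `(x', d)` lie in the same
`Γ₀(N)`-orbit. -/
theorem cusp_equiv_of_mod (N : ℕ) (hN : 0 < N) (d : ℕ) (hd : d ∣ N)
    (x x' : ℤ) (hx : Int.gcd x (d : ℤ) = 1) (hx' : Int.gcd x' (d : ℤ) = 1)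
    (hmod : Int.ModEq ((Nat.gcd d (N / d) : ℤ)) x x') :
    ∃ r u v w : ℤ, r * w - (N : ℤ) * v * u = 1 ∧
      r * x + u * (d : ℤ) = x' ∧ (N : ℤ) * v * x + w * (d : ℤ) = (d : ℤ) :=
  cusp_equiv_of_mod_general N d hd x x' hx hx' hmod
end

section
/- Let N be a positive integer, let a, b be coprime integers, and let k be an integer such that gcd(a, b + k*N) = 1. Then there exists a matrix gamma in SL_2(Z) which is congruent to the identity matrix modulo N and which sends the column vector (a, b) to (a, b + k*N). -/
/- From `z * a + t * (b * (b + c)) = 1` take `γ = 1 + c • M` with `M = !![-b t, a t; z, t (b + c)]`: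
`M` sends `(a, b)` to `(0, 1)`, has trace `t c` and determinant `-t`, so `det γ = 1 + c · tr M + c² det M = 1`. -/
theorem IsCoprime.exists_det_one_congr_one_mod_map_add {R : Type*} [CommRing R] {a b : R} (c : R)
    (h : IsCoprime a (b * (b + c))) :
    ∃ A B C D : R, A * D - B * C = 1 ∧
      c ∣ A - 1 ∧ c ∣ B ∧ c ∣ C ∧ c ∣ D - 1 ∧
      A * a + B * b = a ∧ C * a + D * b = b + c := by
  obtain ⟨z, t, hzt⟩ := h
  refine ⟨1 - c * (b * t), c * (a * t), c * z, 1 + c * (t * (b + c)),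
    ?_, ⟨-(b * t), by ring⟩, dvd_mul_right _ _, dvd_mul_right _ _, ⟨t * (b + c), by ring⟩,
    by ring, ?_⟩
  · linear_combination -(c ^ 2 * t) * hzt
  · linear_combination c * hzt

theorem exists_principal_congruence_matrix_general (N : ℕ) (a b k : ℤ)
    (hab : IsCoprime a b) (hab' : IsCoprime a (b + k * N)) :
    ∃ A B C D : ℤ, A * D - B * C = 1 ∧
      (N : ℤ) ∣ A - 1 ∧ (N : ℤ) ∣ B ∧ (N : ℤ) ∣ C ∧ (N : ℤ) ∣ D - 1 ∧
      A * a + B * b = a ∧ C * a + D * b = b + k * N := by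
  obtain ⟨A, B, C, D, hdet, hA, hB, hC, hD, hfst, hsnd⟩ :=
    (hab.mul_right hab').exists_det_one_congr_one_mod_map_add (k * N)
  have hN : (N : ℤ) ∣ k * N := dvd_mul_left _ _
  exact ⟨A, B, C, D, hdet, hN.trans hA, hN.trans hB, hN.trans hC, hN.trans hD, hfst, hsnd⟩

/-- Lemma 2.4(2): if `gcd(a,b) = 1` and `gcd(a, b + kN) = 1`, then some matrix in
`SL₂(ℤ)` congruent to the identity modulo `N` sends `(a, b)` to `(a, b + kN)`. -/
theorem exists_principal_congruence_matrix (N : ℕ) (hN : 0 < N) (a b k : ℤ)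
    (hab : IsCoprime a b) (hab' : IsCoprime a (b + k * N)) :
    ∃ A B C D : ℤ, A * D - B * C = 1 ∧
      (N : ℤ) ∣ A - 1 ∧ (N : ℤ) ∣ B ∧ (N : ℤ) ∣ C ∧ (N : ℤ) ∣ D - 1 ∧
      A * a + B * b = a ∧ C * a + D * b = b + k * N :=
  exists_principal_congruence_matrix_general N a b k hab hab'
end

section
/- Let N be a positive integer, let a, b be coprime integers, and let y be an integer with gcd(y, a*b*N) = 1. Then the vectors (a, y*b) and (y*a, b) lie in the same Gamma_0(N)-orbit; that is, there exist integers r, u, v, w with r*w - N*v*u = 1, r*a + u*(y*b) = y*a, and N*v*a + w*(y*b) = b. -/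
theorem cusp_equiv_mul_general (N : ℕ) (a b y : ℤ)
    (hy : IsCoprime y (a * b * N)) :
    ∃ r u v w : ℤ, r * w - (N : ℤ) * v * u = 1 ∧
      r * a + u * (y * b) = y * a ∧ (N : ℤ) * v * a + w * (y * b) = b := by
  obtain ⟨p, q, hpq⟩ := hy
  -- With `p y + q a b N = 1`, the matrix `[[y (2 - p y), -N q a²], [N q b², p]]` has determinant
  -- `p y (2 - p y) + (q a b N)² = p y (2 - p y) + (1 - p y)² = 1`.
  refine ⟨y * (2 - p * y), -(N : ℤ) * q * a ^ 2, q * b ^ 2, p, ?_, ?_, ?_⟩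
  · linear_combination (q * a * b * N - p * y + 1) * hpq
  · linear_combination (-y * a) * hpq
  · linear_combination b * hpq

/-- Lemma 2.4(3): if `gcd(a, b) = 1` and `gcd(y, abN) = 1`, then `(a, yb)` and
`(ya, b)` lie in the same `Γ₀(N)`-orbit. -/
theorem cusp_equiv_mul (N : ℕ) (hN : 0 < N) (a b y : ℤ)
    (hab : IsCoprime a b) (hy : IsCoprime y (a * b * N)) :
    ∃ r u v w : ℤ, r * w - (N : ℤ) * v * u = 1 ∧
      r * a + u * (y * b) = y * a ∧ (N : ℤ) * v * a + w * (y * b) = b :=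
  cusp_equiv_mul_general N a b y hy
end

section
/- Let p be a prime and r >= 1, and let Upsilon(p^r) be the tridiagonal (r+1) x (r+1) matrix with Upsilon_{i,j} = p if i = j = 0 or i = j = r, Upsilon_{i,j} = p^{min(j,r-j)-1}(p^2+1) if 1 <= i = j <= r-1, Upsilon_{i,j} = -p^{min(j,r-j)} if |i-j| = 1, and 0 otherwise. Then for each column index f: the weighted sum over i of Upsilon_{i,f} * p^i equals p^{r-1}(p^2 - 1) if f = r and equals 0 if f < r; and the weighted sum over i of Upsilon_{i,f} * p^{r-i} equals p^{r-1}(p^2 - 1) if f = 0 and equals 0 if f > 0. -/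
/-!
Column `j` of `Υ(p^r)` is supported on rows `j - 1, j, j + 1`. Against the weights `p^i`, an
interior column, with `m = min j (r - j) ≥ 1`, gives
`p^(m-1) p^(j-1) (-p + (p^2 + 1) p - p^3) = 0`, the first column gives `p - p = 0` and the last
`p · p^r - p^(r-1)`. The matrix is invariant under
`i ↦ r - i` on both indices, which turns the weights `p^i` into `p^(r-i)` and exchanges the first
and the last column.
-/

/-- The tridiagonal matrix `Υ(p^r)`, indexed by `0, 1, …, r`. -/
def Upsilon (p r : ℕ) : Matrix (Fin (r + 1)) (Fin (r + 1)) ℤ := fun i j =>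
  if (i : ℕ) = (j : ℕ) then
    (if (j : ℕ) = 0 ∨ (j : ℕ) = r then (p : ℤ)
     else (p : ℤ) ^ (min (j : ℕ) (r - (j : ℕ)) - 1) * ((p : ℤ) ^ 2 + 1))
  else if (i : ℕ) = (j : ℕ) + 1 ∨ (j : ℕ) = (i : ℕ) + 1 then
    -(p : ℤ) ^ (min (j : ℕ) (r - (j : ℕ)))
  else 0

open Finset

def upsilonEntry (p r i j : ℕ) : ℤ :=
  if i = j then
    (if j = 0 ∨ j = r then (p : ℤ)
     else (p : ℤ) ^ (min j (r - j) - 1) * ((p : ℤ) ^ 2 + 1))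
  else if i = j + 1 ∨ j = i + 1 then -(p : ℤ) ^ (min j (r - j))
  else 0

section upsilonEntry

variable {p r i j : ℕ}

theorem Upsilon_apply (i j : Fin (r + 1)) : Upsilon p r i j = upsilonEntry p r i j := rfl

theorem upsilonEntry_eq_zero (h : i ≠ j) (h₁ : i ≠ j + 1) (h₂ : j ≠ i + 1) :
    upsilonEntry p r i j = 0 := by
  simp [upsilonEntry, h, h₁, h₂]

variable (w : ℕ → ℤ)

theorem sum_range_upsilonEntry_mul_eq_sum {s : Finset ℕ} (hs : s ⊆ range (r + 1))
    (hsupp : ∀ i < r + 1, i ∉ s → i ≠ j ∧ i ≠ j + 1 ∧ j ≠ i + 1) :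
    ∑ i ∈ range (r + 1), upsilonEntry p r i j * w i =
      ∑ i ∈ s, upsilonEntry p r i j * w i := by
  refine (sum_subset hs fun i hi hi' => ?_).symm
  obtain ⟨h, h₁, h₂⟩ := hsupp i (mem_range.mp hi) hi'
  rw [upsilonEntry_eq_zero h h₁ h₂, zero_mul]

theorem sum_upsilonEntry_zero_mul (hr : 1 ≤ r) :
    ∑ i ∈ range (r + 1), upsilonEntry p r i 0 * w i = p * w 0 - w 1 := by
  rw [sum_range_upsilonEntry_mul_eq_sum w (s := {0, 1})
    (fun i => by simp only [mem_insert, mem_singleton, mem_range]; omega)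
    (fun i => by simp only [mem_insert, mem_singleton]; omega)]
  simp [upsilonEntry, sub_eq_add_neg]

theorem sum_upsilonEntry_last_mul (hr : 1 ≤ r) :
    ∑ i ∈ range (r + 1), upsilonEntry p r i r * w i = p * w r - w (r - 1) := by
  rw [sum_range_upsilonEntry_mul_eq_sum w (s := {r - 1, r})
    (fun i => by simp only [mem_insert, mem_singleton, mem_range]; omega)
    (fun i => by simp only [mem_insert, mem_singleton]; omega)]
  obtain ⟨s, rfl⟩ : ∃ s, r = s + 1 := ⟨r - 1, by omega⟩
  simp [upsilonEntry, sub_eq_add_neg, add_comm]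

theorem sum_upsilonEntry_succ_mul {k : ℕ} (hk : k + 2 ≤ r) :
    ∑ i ∈ range (r + 1), upsilonEntry p r i (k + 1) * w i =
      -(p : ℤ) ^ min (k + 1) (r - (k + 1)) * w k
      + (p : ℤ) ^ (min (k + 1) (r - (k + 1)) - 1) * ((p : ℤ) ^ 2 + 1) * w (k + 1)
      - (p : ℤ) ^ min (k + 1) (r - (k + 1)) * w (k + 2) := by
  rw [sum_range_upsilonEntry_mul_eq_sum w (s := {k, k + 1, k + 2})
    (fun i => by simp only [mem_insert, mem_singleton, mem_range]; omega)
    (fun i => by simp only [mem_insert, mem_singleton]; omega)]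
  simp [upsilonEntry, show k + 1 ≠ r by omega, sub_eq_add_neg, add_assoc]

end upsilonEntry

theorem Upsilon_rev_rev (p r : ℕ) (i j : Fin (r + 1)) :
    Upsilon p r i.rev j.rev = Upsilon p r i j := by
  have hi : r + 1 - (i + 1) = r - i := by omega
  have hj : r + 1 - (j + 1) = r - j := by omega
  have hmin : min (r - j) (r - (r - j)) = min (j : ℕ) (r - j) := by omega
  simp only [Upsilon_apply, upsilonEntry, Fin.val_rev, hi, hj, hmin]
  split_ifs <;> first | rfl | omega

theorem sum_Upsilon_mul_pow (p : ℕ) {r : ℕ} (hr : 1 ≤ r) (f : Fin (r + 1)) :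
    ∑ i : Fin (r + 1), Upsilon p r i f * (p : ℤ) ^ (i : ℕ) =
      if (f : ℕ) = r then (p : ℤ) ^ (r - 1) * ((p : ℤ) ^ 2 - 1) else 0 := by
  obtain ⟨j, hj⟩ := f
  simp only [Upsilon_apply]
  rw [Fin.sum_univ_eq_sum_range (fun i => upsilonEntry p r i j * (p : ℤ) ^ i)]
  rcases Nat.eq_zero_or_pos j with rfl | hj₀
  · rw [sum_upsilonEntry_zero_mul _ hr, if_neg (by omega)]
    ring
  rcases eq_or_ne j r with rfl | hjr
  · obtain ⟨s, rfl⟩ : ∃ s, j = s + 1 := ⟨j - 1, by omega⟩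
    rw [sum_upsilonEntry_last_mul _ hr, if_pos rfl, Nat.add_sub_cancel]
    ring
  obtain ⟨k, rfl⟩ : ∃ k, j = k + 1 := ⟨j - 1, by omega⟩
  obtain ⟨m, hm⟩ : ∃ m, min (k + 1) (r - (k + 1)) = m + 1 :=
    ⟨_, (Nat.succ_pred (by omega)).symm⟩
  rw [sum_upsilonEntry_succ_mul _ (by omega), if_neg hjr, hm, Nat.add_sub_cancel]
  ring

theorem sum_Upsilon_mul_pow_sub (p : ℕ) {r : ℕ} (hr : 1 ≤ r) (f : Fin (r + 1)) :
    ∑ i : Fin (r + 1), Upsilon p r i f * (p : ℤ) ^ (r - (i : ℕ)) =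
      if (f : ℕ) = 0 then (p : ℤ) ^ (r - 1) * ((p : ℤ) ^ 2 - 1) else 0 := by
  have hrev (i : Fin (r + 1)) :
      Upsilon p r i.rev f * (p : ℤ) ^ (r - (i.rev : ℕ)) =
        Upsilon p r i f.rev * (p : ℤ) ^ (i : ℕ) := by
    rw [← Upsilon_rev_rev p r i f.rev, Fin.rev_rev, Fin.val_rev]
    congr 2
    omega
  rw [← Equiv.sum_comp Fin.revPerm]
  simp only [Fin.revPerm_apply, hrev]
  rw [sum_Upsilon_mul_pow p hr f.rev]
  simp only [Fin.val_rev, show r + 1 - ((f : ℕ) + 1) = r ↔ (f : ℕ) = 0 by omega]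

theorem upsilon_weighted_col_sums_general (p r : ℕ) (hr : 1 ≤ r)
    (f : Fin (r + 1)) :
    (∑ i : Fin (r + 1), Upsilon p r i f * (p : ℤ) ^ (i : ℕ) =
      if (f : ℕ) = r then (p : ℤ) ^ (r - 1) * ((p : ℤ) ^ 2 - 1) else 0) ∧
    (∑ i : Fin (r + 1), Upsilon p r i f * (p : ℤ) ^ (r - (i : ℕ)) =
      if (f : ℕ) = 0 then (p : ℤ) ^ (r - 1) * ((p : ℤ) ^ 2 - 1) else 0) :=
  ⟨sum_Upsilon_mul_pow p hr f, sum_Upsilon_mul_pow_sub p hr f⟩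

/-- Lemma 3.8(2),(3): the weighted column sums of `Υ(p^r)` with weights `p^i` and
`p^(r-i)` vanish except in the last and first columns respectively, where they equal
`p^(r-1)(p^2 - 1)`. -/
theorem upsilon_weighted_col_sums (p r : ℕ) (hp : p.Prime) (hr : 1 ≤ r)
    (f : Fin (r + 1)) :
    (∑ i : Fin (r + 1), Upsilon p r i f * (p : ℤ) ^ (i : ℕ) =
      if (f : ℕ) = r then (p : ℤ) ^ (r - 1) * ((p : ℤ) ^ 2 - 1) else 0) ∧
    (∑ i : Fin (r + 1), Upsilon p r i f * (p : ℤ) ^ (r - (i : ℕ)) =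
      if (f : ℕ) = 0 then (p : ℤ) ^ (r - 1) * ((p : ℤ) ^ 2 - 1) else 0) :=
  upsilon_weighted_col_sums_general p r hr f
end

section
/- Let p be a prime and r >= 1. Define the (r+1) x (r+1) matrices Upsilon(p^r) (tridiagonal as above: Upsilon_{i,j} = p if i=j=0 or i=j=r, p^{min(j,r-j)-1}(p^2+1) if 1<=i=j<=r-1, -p^{min(j,r-j)} if |i-j|=1, 0 otherwise) and Lambda'(p^r) with entries Lambda'_{i,j} = p^{r - min(i, r-i) + 2*min(i,j) - i - j} for 0 <= i, j <= r (these exponents are nonnegative integers). Then Upsilon(p^r) * Lambda'(p^r) = Lambda'(p^r) * Upsilon(p^r) = p^{r-1}(p^2 - 1) * Id, where Id is the identity matrix of size r+1. -/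
/-- The matrix `Λ'(p^r) = 24·Λ(p^r)`, with entries
`p^(r - min(i, r-i) + 2 min(i,j) - i - j)`. -/
def Lambda' (p r : ℕ) : Matrix (Fin (r + 1)) (Fin (r + 1)) ℤ := fun i j =>
  (p : ℤ) ^ (r - min (i : ℕ) (r - (i : ℕ)) + 2 * min (i : ℕ) (j : ℕ) - (i : ℕ) - (j : ℕ))

/-!
Write `m j = min j (r - j)`. Then `Υ = S · diag(p^(m j))` and `Λ' = diag(p^(r - m i)) · T`,
where `T i j = p^(-|i-j|)` is a Kac–Murdock–Szegő matrix and `S` is the symmetric tridiagonal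
matrix with off-diagonal entries `-1` and diagonal `p, p + 1/p, …, p + 1/p, p`. Since the two
diagonal factors multiply to `p^r`, both products reduce to `S T = T S = (p - 1/p) · 1`, the
classical inverse of a KMS matrix: an entry of `S T` is a second difference of `j ↦ p^(-|j-k|)`,
which vanishes except at the kink `j = k`. Over `ℤ` each entry is multiplied by a power of `p`
that clears the denominators.
-/

open Finset

theorem Finset.sum_range_eq_add_add {M : Type*} [AddCommMonoid M] {f : ℕ → M} {n : ℕ} (a : ℕ)
    (h : a + 2 < n) (hf : ∀ j < n, j ≠ a → j ≠ a + 1 → j ≠ a + 2 → f j = 0) :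
    ∑ j ∈ range n, f j = f a + f (a + 1) + f (a + 2) := by
  have hsub : ({a, a + 1, a + 2} : Finset ℕ) ⊆ range n := by
    intro j hj
    simp only [mem_insert, mem_singleton] at hj
    rw [mem_range]
    omega
  have hzero : ∀ j ∈ range n, j ∉ ({a, a + 1, a + 2} : Finset ℕ) → f j = 0 := by
    intro j hj hj'
    simp only [mem_insert, mem_singleton, not_or] at hj'
    exact hf j (mem_range.1 hj) hj'.1 hj'.2.1 hj'.2.2
  rw [← sum_subset hsub hzero, sum_insert (by simp), sum_pair (by omega), add_assoc]

section Kms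

variable {R : Type*} [CommRing R]

theorem pow_add_neg_pow_of_eq_add_two (x : R) {a b e : ℕ} (ha : a = e + 2) (hb : b = e) :
    x ^ a + -x ^ b = x ^ e * (x ^ 2 - 1) := by
  subst ha hb; ring

theorem neg_pow_add_pow_mul_add_neg_pow_of_eq (x : R) {a m c e : ℕ} (ha : a = e) (hm : m = e)
    (hc : c = e) : -x ^ a + x ^ m * (x ^ 2 + 1) + -x ^ c = x ^ e * (x ^ 2 - 1) := by
  subst ha hm hc; ring

theorem neg_pow_add_pow_mul_add_neg_pow_eq_zero (x : R) {a m c : ℕ}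
    (h : a = m + 2 ∧ c = m ∨ a = m ∧ c = m + 2) :
    -x ^ a + x ^ m * (x ^ 2 + 1) + -x ^ c = 0 := by
  rcases h with ⟨rfl, rfl⟩ | ⟨rfl, rfl⟩ <;> ring

/-- `x^N · S i j · T j k` in the notation above (with `x` for `p`, indices in `0, …, r`); the
exponents are the true ones only where the truncated subtractions do not cut off. -/
def kmsTerm (x : R) (r N i k j : ℕ) : R :=
  if i = j then
    if j = 0 ∨ j = r then x ^ (N + 1 - i.dist k) else x ^ (N - 1 - i.dist k) * (x ^ 2 + 1)
  else if i = j + 1 ∨ j = i + 1 then -x ^ (N - j.dist k) else 0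

theorem kmsTerm_eq_zero (x : R) {r N i k j : ℕ} (h : i + 1 < j ∨ j + 1 < i) :
    kmsTerm x r N i k j = 0 := by
  rw [kmsTerm, if_neg (by omega), if_neg (by omega)]

theorem kmsTerm_succ_left (x : R) (r N k j : ℕ) :
    kmsTerm x r N (j + 1) k j = -x ^ (N - j.dist k) := by
  simp [kmsTerm]

theorem kmsTerm_succ_right (x : R) (r N i k : ℕ) :
    kmsTerm x r N i k (i + 1) = -x ^ (N - (i + 1).dist k) := by
  simp [kmsTerm]

theorem kmsTerm_self_of_end (x : R) {r N i : ℕ} (k : ℕ) (h : i = 0 ∨ i = r) :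
    kmsTerm x r N i k i = x ^ (N + 1 - i.dist k) := by
  simp [kmsTerm, h]

theorem kmsTerm_self (x : R) {r N i : ℕ} (k : ℕ) (h₀ : i ≠ 0) (hr : i ≠ r) :
    kmsTerm x r N i k i = x ^ (N - 1 - i.dist k) * (x ^ 2 + 1) := by
  simp [kmsTerm, h₀, hr]

theorem sum_kmsTerm (x : R) {r N i k : ℕ} (hr : 1 ≤ r) (hi : i ≤ r) (hk : k ≤ r) (hN : 0 < N)
    (hiN : 0 < i → i < r → i.dist k < N) :
    ∑ j ∈ range (r + 1), kmsTerm x r N i k j = if i = k then x ^ (N - 1) * (x ^ 2 - 1) else 0 := by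
  rcases Nat.eq_zero_or_pos i with rfl | hi₀
  · rw [sum_eq_add_of_mem 0 (0 + 1) (mem_range.2 (by omega)) (mem_range.2 (by omega)) zero_ne_one
        fun j _ hne => by apply kmsTerm_eq_zero; omega,
      kmsTerm_self_of_end x k (.inl rfl), kmsTerm_succ_right]
    simp only [Nat.dist]
    split_ifs with h
    · apply pow_add_neg_pow_of_eq_add_two <;> omega
    · exact add_neg_eq_zero.mpr (congrArg (x ^ ·) (by omega))
  obtain rfl | hir := eq_or_lt_of_le hi
  · obtain ⟨b, rfl⟩ : ∃ b, i = b + 1 := ⟨i - 1, by omega⟩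
    rw [sum_eq_add_of_mem b (b + 1) (mem_range.2 (by omega)) (mem_range.2 (by omega)) (by omega)
        fun j hj hne => by apply kmsTerm_eq_zero; rw [mem_range] at hj; omega,
      add_comm, kmsTerm_self_of_end x k (.inr rfl), kmsTerm_succ_left]
    simp only [Nat.dist]
    split_ifs with h
    · apply pow_add_neg_pow_of_eq_add_two <;> omega
    · exact add_neg_eq_zero.mpr (congrArg (x ^ ·) (by omega))
  · obtain ⟨a, rfl⟩ : ∃ a, i = a + 1 := ⟨i - 1, by omega⟩
    rw [sum_range_eq_add_add a (by omega) fun j _ h₁ h₂ h₃ => by apply kmsTerm_eq_zero; omega,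
      kmsTerm_succ_left, kmsTerm_self x k (by omega) (by omega), kmsTerm_succ_right]
    have hdist := hiN hi₀ hir
    simp only [Nat.dist] at hdist ⊢
    split_ifs with h
    · apply neg_pow_add_pow_mul_add_neg_pow_of_eq <;> omega
    · apply neg_pow_add_pow_mul_add_neg_pow_eq_zero; omega

end Kms

theorem upsilon_mul_lambda'_term (p r : ℕ) (i j k : Fin (r + 1)) :
    Upsilon p r i j * Lambda' p r j k = kmsTerm (p : ℤ) r r i k j := by
  simp only [Upsilon, Lambda', kmsTerm, Nat.dist]
  split_ifs
  · rw [← pow_succ']; congr 1; omega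
  · rw [mul_right_comm, ← pow_add]; congr 2; omega
  · rw [neg_mul, ← pow_add]; congr 2; omega
  · rw [zero_mul]

-- `S` and `T` are symmetric, so `(T S) i k = (S T) k i`: row `k` appears with target column `i`.
theorem lambda'_mul_upsilon_term (p r : ℕ) (i j k : Fin (r + 1)) :
    Lambda' p r i j * Upsilon p r j k =
      kmsTerm (p : ℤ) r (r - min (i : ℕ) (r - i) + min (k : ℕ) (r - k)) k i j := by
  simp only [Upsilon, Lambda', kmsTerm, Nat.dist]
  split_ifs <;> try (exfalso; omega)
  · rw [← pow_succ]; congr 1; omega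
  · rw [← mul_assoc, ← pow_add]; congr 2; omega
  · rw [mul_neg, ← pow_add]; congr 2; omega
  · rw [mul_zero]

theorem upsilon_mul_lambda'_apply (p : ℕ) {r : ℕ} (hr : 1 ≤ r) (i k : Fin (r + 1)) :
    (Upsilon p r * Lambda' p r) i k =
      if i = k then (p : ℤ) ^ (r - 1) * ((p : ℤ) ^ 2 - 1) else 0 := by
  simp only [Matrix.mul_apply, upsilon_mul_lambda'_term]
  rw [Fin.sum_univ_eq_sum_range (kmsTerm (p : ℤ) r r i k) (r + 1),
    sum_kmsTerm _ hr (by omega) (by omega) (by omega) (fun _ _ => by simp only [Nat.dist]; omega)]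
  simp only [Fin.val_inj]

theorem lambda'_mul_upsilon_apply (p : ℕ) {r : ℕ} (hr : 1 ≤ r) (i k : Fin (r + 1)) :
    (Lambda' p r * Upsilon p r) i k =
      if i = k then (p : ℤ) ^ (r - 1) * ((p : ℤ) ^ 2 - 1) else 0 := by
  simp only [Matrix.mul_apply, lambda'_mul_upsilon_term]
  rw [Fin.sum_univ_eq_sum_range (kmsTerm (p : ℤ) r _ k i) (r + 1),
    sum_kmsTerm _ hr (by omega) (by omega) (by omega) (fun _ _ => by simp only [Nat.dist]; omega)]
  simp only [Fin.val_inj, eq_comm (a := k)]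
  split_ifs with h
  · subst h; congr 2; omega
  · rfl

theorem upsilon_mul_lambda_general (p r : ℕ) (hr : 1 ≤ r) :
    Upsilon p r * Lambda' p r =
        ((p : ℤ) ^ (r - 1) * ((p : ℤ) ^ 2 - 1)) • (1 : Matrix (Fin (r + 1)) (Fin (r + 1)) ℤ) ∧
    Lambda' p r * Upsilon p r =
        ((p : ℤ) ^ (r - 1) * ((p : ℤ) ^ 2 - 1)) • (1 : Matrix (Fin (r + 1)) (Fin (r + 1)) ℤ) := by
  constructor <;> ext i k <;>
    simp [upsilon_mul_lambda'_apply, lambda'_mul_upsilon_apply, hr, Matrix.one_apply]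

/-- Lemma 3.7 for prime powers: `Υ(p^r) · Λ'(p^r) = Λ'(p^r) · Υ(p^r) = p^(r-1)(p^2-1)·Id`. -/
theorem upsilon_mul_lambda (p r : ℕ) (hp : p.Prime) (hr : 1 ≤ r) :
    Upsilon p r * Lambda' p r =
        ((p : ℤ) ^ (r - 1) * ((p : ℤ) ^ 2 - 1)) • (1 : Matrix (Fin (r + 1)) (Fin (r + 1)) ℤ) ∧
    Lambda' p r * Upsilon p r =
        ((p : ℤ) ^ (r - 1) * ((p : ℤ) ^ 2 - 1)) • (1 : Matrix (Fin (r + 1)) (Fin (r + 1)) ℤ) :=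
  upsilon_mul_lambda_general p r hr
end
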